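/- Let λ₁λ₂ > 0, Q(u) = (λ₁u₁² + λ₂u₂²)/2, X(u) = (u₁,u₂,Q(u)), and let U₀ ⊂ ℝ² be a compact set. For a unit vector v ∈ ℝ³ define h_v(u) := n_Q(u)·v. Then there exists c > 0, depending only on λ₁, λ₂, and U₀, such that for every unit vector v ∈ ℝ³, every u ∈ U₀ with h_v(u) = 0, and every w ∈ ℝ² with |w| = 1 and ∇_u h_v(u)·w = 0, one has |π_v(DX(u)w)| ≥ c, where DX(u)w = (w₁, w₂, λ₁u₁w₁ + λ₂u₂w₂) is the differential of X at u applied to w and π_v is the orthogonal projection of ℝ³ onto v^⊥. -/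

import Mathlib

/-!
Write `h_v = s^{-1/2} p` with `s = 1 + λ₁²u₁² + λ₂²u₂²` and `p` affine. At a zero of `h_v`
the factor `p` vanishes, so `∇h_v(u)·w = 0` says exactly `λ₁v₁w₁ + λ₂v₂w₂ = 0`. If
`π_v(DX(u)w) = 0` then `DX(u)w = a v`, so `(w₁, w₂) = a (v₁, v₂)` and the constraint becomes
`λ₁w₁² + λ₂w₂² = 0`, which the definiteness `λ₁λ₂ > 0` rules out for `w ≠ 0`. Compactness of
the unit spheres and of `U₀` turns this pointwise nonvanishing into a uniform lower bound.
-/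

noncomputable section
open MeasureTheory Metric Set Function
open scoped ENNReal RealInnerProductSpace

abbrev E3 : Type := EuclideanSpace ℝ (Fin 3)
abbrev E2 : Type := EuclideanSpace ℝ (Fin 2)

def mk3 (a b c : ℝ) : E3 := (WithLp.equiv 2 (Fin 3 → ℝ)).symm ![a, b, c]

/-- Unit normal of the quadratic graph at `X(u)`. -/
def nQ (l₁ l₂ : ℝ) (u : E2) : E3 :=
  (Real.sqrt (1 + l₁ ^ 2 * (u 0) ^ 2 + l₂ ^ 2 * (u 1) ^ 2))⁻¹ •
    mk3 (-(l₁ * u 0)) (-(l₂ * u 1)) 1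

/-- The tangency function `h_v(u) = n_Q(u)·v`. -/
def hFun (l₁ l₂ : ℝ) (v : E3) (u : E2) : ℝ := ⟪nQ l₁ l₂ u, v⟫

/-- The differential of `X` at `u` applied to `w`: `DX(u)w = (w₁, w₂, l₁u₁w₁ + l₂u₂w₂)`. -/
def DX (l₁ l₂ : ℝ) (u : E2) (w : E2) : E3 :=
  mk3 (w 0) (w 1) (l₁ * u 0 * w 0 + l₂ * u 1 * w 1)

/-- Orthogonal projection onto the plane `v^⊥`. -/
def projPerp (v x : E3) : E3 := x - ⟪x, v⟫ • v

theorem HasFDerivAt.mul_of_right_eq_zero {E : Type*} [NormedAddCommGroup E] [NormedSpace ℝ E]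
    {g p : E → ℝ} {g' p' : E →L[ℝ] ℝ} {x : E} (hg : HasFDerivAt g g' x)
    (hp : HasFDerivAt p p' x) (hpx : p x = 0) :
    HasFDerivAt (fun y => g y * p y) (g x • p') x := by
  have := hg.mul hp
  rwa [hpx, zero_smul, add_zero] at this

@[fun_prop]
lemma Continuous.mk3 {α : Type*} [TopologicalSpace α] {f g h : α → ℝ}
    (hf : Continuous f) (hg : Continuous g) (hh : Continuous h) :
    Continuous fun x => mk3 (f x) (g x) (h x) :=
  (PiLp.continuous_toLp 2 _).comp <| continuous_pi fun i => by fin_cases i <;> simpa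

lemma continuous_projPerp_DX (l₁ l₂ : ℝ) :
    Continuous fun x : E3 × E2 × E2 => projPerp x.1 (DX l₁ l₂ x.2.1 x.2.2) := by
  unfold projPerp DX
  fun_prop

lemma eq_zero_of_mul_sq_add_mul_sq_eq_zero {a b x y : ℝ} (hab : 0 < a * b)
    (h : a * x ^ 2 + b * y ^ 2 = 0) : x = 0 ∧ y = 0 := by
  have ha : a ≠ 0 := left_ne_zero_of_mul hab.ne'
  have hb : b ≠ 0 := right_ne_zero_of_mul hab.ne'
  have hx : (a * x) ^ 2 + a * b * y ^ 2 = 0 := by linear_combination a * h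
  have hy : (b * y) ^ 2 + a * b * x ^ 2 = 0 := by linear_combination b * h
  have hx' : (a * x) ^ 2 = 0 := by nlinarith [mul_nonneg hab.le (sq_nonneg y), sq_nonneg (a * x)]
  have hy' : (b * y) ^ 2 = 0 := by nlinarith [mul_nonneg hab.le (sq_nonneg x), sq_nonneg (b * y)]
  simpa [ha, hb] using And.intro hx' hy'

lemma hFun_eq (l₁ l₂ : ℝ) (v : E3) (u : E2) :
    hFun l₁ l₂ v u = (√(1 + l₁ ^ 2 * u 0 ^ 2 + l₂ ^ 2 * u 1 ^ 2))⁻¹ *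
      (v 2 - l₁ * u 0 * v 0 - l₂ * u 1 * v 1) := by
  simp only [hFun, nQ, mk3, WithLp.equiv_symm_apply, PiLp.inner_apply, PiLp.smul_apply,
    smul_eq_mul, RCLike.inner_apply, Real.ringHom_apply, Fin.sum_univ_three, Matrix.cons_val_zero,
    Matrix.cons_val_one, Matrix.cons_val]
  ring

lemma inner_gradient_hFun_of_eq_zero {l₁ l₂ : ℝ} {v : E3} {u : E2} (hu : hFun l₁ l₂ v u = 0)
    (w : E2) :
    ⟪gradient (hFun l₁ l₂ v) u, w⟫ =
      -(√(1 + l₁ ^ 2 * u 0 ^ 2 + l₂ ^ 2 * u 1 ^ 2))⁻¹ * (l₁ * v 0 * w 0 + l₂ * v 1 * w 1) := by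
  have hnum : v 2 - l₁ * u 0 * v 0 - l₂ * u 1 * v 1 = 0 := by
    rw [hFun_eq] at hu
    exact (mul_eq_zero.mp hu).resolve_left (by positivity)
  have hg : DifferentiableAt ℝ
      (fun y : E2 => (√(1 + l₁ ^ 2 * y 0 ^ 2 + l₂ ^ 2 * y 1 ^ 2))⁻¹) u := by
    fun_prop (disch := positivity)
  set p' : E2 →L[ℝ] ℝ := -(l₁ * v 0) • EuclideanSpace.proj 0 - (l₂ * v 1) • EuclideanSpace.proj 1
  have hp : HasFDerivAt (fun y : E2 => v 2 - l₁ * y 0 * v 0 - l₂ * y 1 * v 1) p' u :=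
    (p'.hasFDerivAt.const_add (v 2)).congr_of_eventuallyEq <| .of_forall fun y => by
      simp only [neg_smul, sub_apply, neg_apply, smul_apply, PiLp.proj_apply, smul_eq_mul, p']
      ring
  rw [inner_gradient_left, funext (hFun_eq l₁ l₂ v),
    (hg.hasFDerivAt.mul_of_right_eq_zero hp hnum).fderiv]
  simp only [neg_smul, smul_apply, sub_apply, neg_apply, PiLp.proj_apply, smul_eq_mul, p']
  ring

lemma projPerp_DX_ne_zero {l₁ l₂ : ℝ} (hl : 0 < l₁ * l₂) (v : E3) (u : E2) {w : E2} (hw : w ≠ 0)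
    (hvw : l₁ * v 0 * w 0 + l₂ * v 1 * w 1 = 0) : projPerp v (DX l₁ l₂ u w) ≠ 0 := by
  intro h
  set a := ⟪DX l₁ l₂ u w, v⟫
  have hDX : DX l₁ l₂ u w = a • v := sub_eq_zero.mp h
  have hw0 : w 0 = a * v 0 := by simpa [DX, mk3] using congrArg (· 0) hDX
  have hw1 : w 1 = a * v 1 := by simpa [DX, mk3] using congrArg (· 1) hDX
  have hquad : l₁ * w 0 ^ 2 + l₂ * w 1 ^ 2 = 0 := by
    linear_combination a * hvw + l₁ * w 0 * hw0 + l₂ * w 1 * hw1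
  obtain ⟨h0, h1⟩ := eq_zero_of_mul_sq_add_mul_sq_eq_zero hl hquad
  exact hw <| by ext i; fin_cases i <;> simp [h0, h1]

lemma exists_pos_le_norm_projPerp_DX {l₁ l₂ : ℝ} (hl : 0 < l₁ * l₂) {U₀ : Set E2}
    (hU₀ : IsCompact U₀) :
    ∃ c : ℝ, 0 < c ∧ ∀ v : E3, ‖v‖ = 1 → ∀ u ∈ U₀, ∀ w : E2, ‖w‖ = 1 →
      l₁ * v 0 * w 0 + l₂ * v 1 * w 1 = 0 → c ≤ ‖projPerp v (DX l₁ l₂ u w)‖ := by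
  -- The penalty term vanishes on the constraint set and lets us minimise over a product of
  -- compact sets instead.
  let f : E3 × E2 × E2 → ℝ := fun x =>
    ‖projPerp x.1 (DX l₁ l₂ x.2.1 x.2.2)‖ + |l₁ * x.1 0 * x.2.2 0 + l₂ * x.1 1 * x.2.2 1|
  have hK : IsCompact (sphere (0 : E3) 1 ×ˢ U₀ ×ˢ sphere (0 : E2) 1) :=
    (isCompact_sphere 0 1).prod (hU₀.prod (isCompact_sphere 0 1))
  have hf : Continuous f := (continuous_projPerp_DX l₁ l₂).norm.add (by fun_prop)
  have hpos : ∀ x ∈ sphere (0 : E3) 1 ×ˢ U₀ ×ˢ sphere (0 : E2) 1, 0 < f x := by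
    rintro ⟨v, u, w⟩ ⟨-, -, hw⟩
    have hw : w ≠ 0 := ne_zero_of_mem_unit_sphere ⟨w, hw⟩
    by_cases hvw : l₁ * v 0 * w 0 + l₂ * v 1 * w 1 = 0
    · simpa [f, hvw] using projPerp_DX_ne_zero hl v u hw hvw
    · exact add_pos_of_nonneg_of_pos (norm_nonneg _) (abs_pos.mpr hvw)
  obtain ⟨c, hc, hcf⟩ := hK.exists_forall_le' hf.continuousOn hpos
  refine ⟨c, hc, fun v hv u hu w hw hvw => ?_⟩
  simpa [f, hvw] using hcf (v, u, w) ⟨by simpa using hv, hu, by simpa using hw⟩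

/-- projective nondegeneracy of the elliptic tangency curve. -/
theorem tangency_curve_projection_nondegenerate (l₁ l₂ : ℝ) (hl : 0 < l₁ * l₂)
    (U₀ : Set E2) (hU₀ : IsCompact U₀) :
    ∃ c : ℝ, 0 < c ∧
      ∀ v : E3, ‖v‖ = 1 → ∀ u ∈ U₀, hFun l₁ l₂ v u = 0 →
        ∀ w : E2, ‖w‖ = 1 → ⟪gradient (hFun l₁ l₂ v) u, w⟫ = 0 →
          c ≤ ‖projPerp v (DX l₁ l₂ u w)‖ := by
  obtain ⟨c, hc, hbound⟩ := exists_pos_le_norm_projPerp_DX hl hU₀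
  refine ⟨c, hc, fun v hv u hu hvu w hw hgrad => hbound v hv u hu w hw ?_⟩
  rw [inner_gradient_hFun_of_eq_zero hvu] at hgrad
  exact (mul_eq_zero.mp hgrad).resolve_left (neg_ne_zero.mpr (by positivity))
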